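/- (Finalized pairs keep good stretch.) Let G be a weighted graph with maximum edge weight W > 0, let k = 2R+1 for an integer R ≥ 0, and let H ⊆ G be a subgraph. Let a, b, s, s′ be vertices such that dist_H(a,s) ≤ R·W, dist_H(b,s′) ≤ R·W, and dist_H(s,s′) ≤ k·dist_G(s,s′) − k²·W. Then dist_H(a,b) ≤ k·dist_G(a,b); in fact dist_H(a,b) < k·dist_G(a,b) (strictly, since the computation gives dist_H(a,b) ≤ k·dist_G(a,b) − W). -/

import Mathlib

/- Weighted graphs: a `SimpleGraph V` together with a symmetric weight function
`w : V → V → ℝ≥0` that is positive on edges.  The weight of a walk is the sum of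
its edge weights, and `wDist G w u v` is the shortest-path distance in `G`
(`∞` if `u` and `v` are not connected). -/

open scoped ENNReal

noncomputable def walkWeight {V : Type*} {G : SimpleGraph V} (w : V → V → NNReal)
    {u v : V} (p : G.Walk u v) : ℝ≥0∞ :=
  (p.darts.map fun d => (w d.toProd.1 d.toProd.2 : ℝ≥0∞)).sum

/-- Shortest-path distance in `G` w.r.t. the weights `w`. -/
noncomputable def wDist {V : Type*} (G : SimpleGraph V) (w : V → V → NNReal) (u v : V) : ℝ≥0∞ :=
  ⨅ p : G.Walk u v, walkWeight w p

open Classical in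
/-- `Wmax G w` is the maximum edge weight of `G`. -/
noncomputable def Wmax {V : Type*} [Fintype V] (G : SimpleGraph V) (w : V → V → NNReal) : NNReal :=
  Finset.univ.sup fun p : V × V => if G.Adj p.1 p.2 then w p.1 p.2 else 0

/-! Going around through `s` and `s'` costs `H` at most `2RW` extra, while the `G`-distance of
`s, s'` exceeds that of `a, b` by at most `2RW`.  The slack `k²W` of the finalized pair pays for
both: `2RW + 2kRW = (k² - 1)W`, which leaves `W` to spare. -/

section WeightedDist

variable {V : Type*} {G H : SimpleGraph V} {w : V → V → NNReal}

lemma walkWeight_append {u v x : V} (p : G.Walk u v) (q : G.Walk v x) :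
    walkWeight w (p.append q) = walkWeight w p + walkWeight w q := by
  simp [walkWeight, SimpleGraph.Walk.darts_append]

lemma walkWeight_mapLe (h : H ≤ G) {u v : V} (p : H.Walk u v) :
    walkWeight w (p.mapLe h) = walkWeight w p := by
  simp [walkWeight, SimpleGraph.Walk.mapLe, SimpleGraph.Walk.darts_map, Function.comp_def]

lemma walkWeight_reverse (hsymm : ∀ u v, w u v = w v u) {u v : V} (p : G.Walk u v) :
    walkWeight w p.reverse = walkWeight w p := by
  simp only [walkWeight, SimpleGraph.Walk.darts_reverse, List.map_map, List.map_reverse,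
    List.sum_reverse]
  congr 1
  refine List.map_congr_left fun d _ => ?_
  simp [SimpleGraph.Dart.symm, hsymm d.toProd.1 d.toProd.2]

lemma wDist_triangle (u v x : V) : wDist G w u x ≤ wDist G w u v + wDist G w v x := by
  simp only [wDist, ENNReal.iInf_add, ENNReal.add_iInf]
  exact le_iInf₂ fun q p => (iInf_le _ (p.append q)).trans_eq (walkWeight_append p q)

lemma wDist_le_detour (u x y v : V) :
    wDist G w u v ≤ wDist G w u x + wDist G w x y + wDist G w y v :=
  calc wDist G w u v ≤ wDist G w u y + wDist G w y v := wDist_triangle u y v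
    _ ≤ wDist G w u x + wDist G w x y + wDist G w y v := by gcongr; exact wDist_triangle u x y

lemma wDist_le_wDist_of_le (h : H ≤ G) (u v : V) : wDist G w u v ≤ wDist H w u v :=
  le_iInf fun p => (iInf_le _ (p.mapLe h)).trans_eq (walkWeight_mapLe h p)

lemma wDist_comm (hsymm : ∀ u v, w u v = w v u) (u v : V) : wDist G w u v = wDist G w v u := by
  have key : ∀ x y : V, wDist G w x y ≤ wDist G w y x := fun x y =>
    le_iInf fun p => (iInf_le _ p.reverse).trans_eq (walkWeight_reverse hsymm p)
  exact le_antisymm (key u v) (key v u)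

end WeightedDist

lemma ENNReal.add_le_mul_of_detour {x y D d W : ℝ≥0∞} (hW : W ≠ ⊤) (R k : ℕ)
    (hk : k = 2 * R + 1) (hx : x ≤ R * W + y + R * W)
    (hy : y + ((k ^ 2 : ℕ) : ℝ≥0∞) * W ≤ k * D) (hD : D ≤ R * W + d + R * W) :
    x + W ≤ k * d := by
  have hslack : ((k ^ 2 : ℕ) : ℝ≥0∞) * W ≠ ⊤ :=
    ENNReal.mul_ne_top (ENNReal.natCast_ne_top _) hW
  rw [← ENNReal.add_le_add_iff_right hslack]
  calc x + W + ((k ^ 2 : ℕ) : ℝ≥0∞) * W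
      ≤ R * W + y + R * W + W + ((k ^ 2 : ℕ) : ℝ≥0∞) * W := by gcongr
    _ = 2 * R * W + W + (y + ((k ^ 2 : ℕ) : ℝ≥0∞) * W) := by ring
    _ ≤ 2 * R * W + W + k * (R * W + d + R * W) := by gcongr; exact hy.trans (by gcongr)
    _ = k * d + ((k ^ 2 : ℕ) : ℝ≥0∞) * W := by subst hk; push_cast; ring

theorem finalized_pairs_good_stretch_general {V : Type*} [Fintype V]
    (G H : SimpleGraph V) (hHG : H ≤ G)
    (w : V → V → NNReal)
    (hsymm : ∀ u v, w u v = w v u)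
    (R k : ℕ) (hk : k = 2 * R + 1)
    (a b s s' : V)
    (has : wDist H w a s ≤ (R : ℝ≥0∞) * (Wmax G w : ℝ≥0∞))
    (hbs' : wDist H w b s' ≤ (R : ℝ≥0∞) * (Wmax G w : ℝ≥0∞))
    (hfin : wDist H w s s' + ((k ^ 2 : ℕ) : ℝ≥0∞) * (Wmax G w : ℝ≥0∞) ≤
      (k : ℝ≥0∞) * wDist G w s s') :
    wDist H w a b ≤ (k : ℝ≥0∞) * wDist G w a b ∧
      wDist H w a b + (Wmax G w : ℝ≥0∞) ≤ (k : ℝ≥0∞) * wDist G w a b := by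
  have hab : wDist H w a b ≤ R * Wmax G w + wDist H w s s' + R * Wmax G w :=
    calc wDist H w a b ≤ wDist H w a s + wDist H w s s' + wDist H w s' b :=
          wDist_le_detour a s s' b
      _ ≤ R * Wmax G w + wDist H w s s' + R * Wmax G w := by
        rw [wDist_comm hsymm s' b]; gcongr
  have hss' : wDist G w s s' ≤ R * Wmax G w + wDist G w a b + R * Wmax G w :=
    calc wDist G w s s' ≤ wDist G w s a + wDist G w a b + wDist G w b s' :=
          wDist_le_detour s a b s'
      _ ≤ R * Wmax G w + wDist G w a b + R * Wmax G w := by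
        rw [wDist_comm hsymm s a]
        gcongr
        exacts [(wDist_le_wDist_of_le hHG a s).trans has,
          (wDist_le_wDist_of_le hHG b s').trans hbs']
  have key := ENNReal.add_le_mul_of_detour ENNReal.coe_ne_top R k hk hab hfin hss'
  exact ⟨le_self_add.trans key, key⟩

/-- **Lemma (finalized pairs keep good stretch).** Let `G` have maximum edge weight
`W_max(G) > 0`, let `k = 2R+1`, and `H ⊆ G`.  If `dist_H(a,s) ≤ R·W`,
`dist_H(b,s') ≤ R·W`, and the pair `(s,s')` is finalized, i.e.
`dist_H(s,s') ≤ k·dist_G(s,s') − k²·W` (subtraction-free form), then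
`dist_H(a,b) ≤ k·dist_G(a,b)`; in fact `dist_H(a,b) ≤ k·dist_G(a,b) − W`
(again in subtraction-free form, giving strict inequality). -/
theorem finalized_pairs_good_stretch {V : Type*} [Fintype V]
    (G H : SimpleGraph V) (hHG : H ≤ G)
    (w : V → V → NNReal)
    (hsymm : ∀ u v, w u v = w v u)
    (hpos : ∀ u v, G.Adj u v → 0 < w u v)
    (hWpos : 0 < Wmax G w)
    (R k : ℕ) (hk : k = 2 * R + 1)
    (a b s s' : V)
    (has : wDist H w a s ≤ (R : ℝ≥0∞) * (Wmax G w : ℝ≥0∞))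
    (hbs' : wDist H w b s' ≤ (R : ℝ≥0∞) * (Wmax G w : ℝ≥0∞))
    (hfin : wDist H w s s' + ((k ^ 2 : ℕ) : ℝ≥0∞) * (Wmax G w : ℝ≥0∞) ≤
      (k : ℝ≥0∞) * wDist G w s s') :
    wDist H w a b ≤ (k : ℝ≥0∞) * wDist G w a b ∧
      wDist H w a b + (Wmax G w : ℝ≥0∞) ≤ (k : ℝ≥0∞) * wDist G w a b :=
  finalized_pairs_good_stretch_general G H hHG w hsymm R k hk a b s s' has hbs' hfin
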